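/- arXiv:1812.03865 — 2 statements merged into one kernel-verified Lean document; each statement's English description precedes it below -/
import Mathlib

section
/- (Fundamental theorem of space curves, uniqueness) If α, α̃ : I → ℝ³ are unit-speed curves with the same positive curvature κ(s) and the same torsion τ(s), then there exist a rotation ρ ∈ SO(3) and a vector c ∈ ℝ³ such that α̃(s) = ρ(α(s)) + c for all s in some subinterval of I. -/
/-
The Frenet frame `F = (T, N, B)` of a unit-speed curve with nonvanishing curvature is orthonormal
and satisfies `dF/ds = A F` with the skew-symmetric `A = [[0, κ, 0], [-κ, 0, τ], [0, -τ, 0]]`.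
Let `ρ` be the rotation carrying the frame of `α` at a point `s₀` to the frame `F̃` of `α'` there.
Then `D = ρ F - F̃` solves the same linear system with `D s₀ = 0`, and skew-symmetry of `A` makes
`∑ ‖Dᵢ‖²` constant, so `D = 0`. In particular `ρ T = T̃`, hence `α' - ρ ∘ α` is constant.
`det ρ > 0` because both frames are positively oriented (`B = T × N`).
-/

open Real
open scoped RealInnerProductSpace

noncomputable def cross3 (u v : EuclideanSpace ℝ (Fin 3)) : EuclideanSpace ℝ (Fin 3) :=
  (WithLp.equiv 2 (Fin 3 → ℝ)).symm
    ![u 1 * v 2 - u 2 * v 1, u 2 * v 0 - u 0 * v 2, u 0 * v 1 - u 1 * v 0]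

open Filter Topology Matrix WithLp

local notation "E3" => EuclideanSpace ℝ (Fin 3)

section Orthonormal

variable {ι 𝕜 E : Type*} [Fintype ι] [RCLike 𝕜] [NormedAddCommGroup E] [InnerProductSpace 𝕜 E]
  [FiniteDimensional 𝕜 E] {v w : ι → E}

theorem Orthonormal.exists_orthonormalBasis_coe_eq (hv : Orthonormal 𝕜 v)
    (hcard : Fintype.card ι = Module.finrank 𝕜 E) : ∃ b : OrthonormalBasis ι 𝕜 E, ⇑b = v :=
  have hsp := (hv.linearIndependent.span_eq_top_of_card_eq_finrank' hcard).ge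
  ⟨.mk hv hsp, OrthonormalBasis.coe_mk hv hsp⟩

theorem Orthonormal.exists_linearIsometryEquiv_apply_eq (hv : Orthonormal 𝕜 v)
    (hw : Orthonormal 𝕜 w) (hcard : Fintype.card ι = Module.finrank 𝕜 E) :
    ∃ ρ : E ≃ₗᵢ[𝕜] E, ∀ i, ρ (v i) = w i := by
  obtain ⟨b, rfl⟩ := hv.exists_orthonormalBasis_coe_eq hcard
  obtain ⟨b', rfl⟩ := hw.exists_orthonormalBasis_coe_eq hcard
  exact ⟨b.equiv b' (Equiv.refl ι), fun i => b.equiv_apply_basis b' _ i⟩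

end Orthonormal

section Derivatives

variable {E : Type*} [NormedAddCommGroup E] [InnerProductSpace ℝ E] {f g : ℝ → E} {f' g' : E}
  {s c : ℝ}

theorem HasDerivAt.inner_add_inner_eq_zero (hf : HasDerivAt f f' s) (hg : HasDerivAt g g' s)
    (hc : ∀ᶠ t in 𝓝 s, ⟪f t, g t⟫ = c) : ⟪f s, g'⟫ + ⟪f', g s⟫ = 0 :=
  (hf.inner ℝ hg).unique ((hasDerivAt_const s c).congr_of_eventuallyEq hc)

theorem HasDerivAt.inner_eq_zero_of_norm_eventually_eq (hf : HasDerivAt f f' s)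
    (hc : ∀ᶠ t in 𝓝 s, ‖f t‖ = c) : ⟪f s, f'⟫ = 0 := by
  simpa using hf.norm_sq.unique ((hasDerivAt_const s (c ^ 2)).congr_of_eventuallyEq
    (hc.mono fun t ht => by simp only [ht]))

theorem ContDiffOn.hasDerivAt_deriv {I : Set ℝ} {n : WithTop ℕ∞} (hf : ContDiffOn ℝ n f I)
    (hn : n ≠ 0) (hI : IsOpen I) (hs : s ∈ I) : HasDerivAt f (deriv f s) s :=
  ((hf.contDiffAt (hI.mem_nhds hs)).differentiableAt hn).hasDerivAt

section SkewLinearSystem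

variable {ι : Type*} [Fintype ι] {D : ℝ → ι → E}

theorem hasDerivAt_sum_norm_sq_of_skew {A : Matrix ι ι ℝ} (hA : Aᵀ = -A)
    (hD : ∀ i, HasDerivAt (fun t => D t i) (∑ j, A i j • D s j) s) :
    HasDerivAt (fun t => ∑ i, ‖D t i‖ ^ 2) 0 s := by
  have hskew : ∀ i j, A j i = -A i j := fun i j => by
    simpa using congrFun (congrFun hA i) j
  have hzero : ∑ i, ∑ j, A i j * ⟪D s i, D s j⟫ = 0 := by
    have h : ∑ i, ∑ j, A i j * ⟪D s i, D s j⟫ = -∑ i, ∑ j, A i j * ⟪D s i, D s j⟫ := by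
      conv_lhs => rw [Finset.sum_comm]
      simp only [← Finset.sum_neg_distrib]
      refine Finset.sum_congr rfl fun i _ => Finset.sum_congr rfl fun j _ => ?_
      rw [hskew i j, real_inner_comm (D s i) (D s j), neg_mul]
    linarith
  refine (HasDerivAt.fun_sum fun i _ => (hD i).norm_sq).congr_deriv ?_
  simp [inner_sum, real_inner_smul_right, ← Finset.mul_sum, hzero]

theorem eqOn_zero_of_skew_linear_ode {I : Set ℝ} (hI : IsOpen I) (hIc : IsPreconnected I)
    {A : ℝ → Matrix ι ι ℝ} (hA : ∀ s ∈ I, (A s)ᵀ = -A s)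
    (hD : ∀ s ∈ I, ∀ i, HasDerivAt (fun t => D t i) (∑ j, A s i j • D s j) s)
    {s₀ : ℝ} (hs₀ : s₀ ∈ I) (h₀ : D s₀ = 0) : Set.EqOn D 0 I := by
  intro s hs
  have hderiv t (ht : t ∈ I) := hasDerivAt_sum_norm_sq_of_skew (hA t ht) (hD t ht)
  have hconst : ∑ i, ‖D s i‖ ^ 2 = 0 := by
    simpa [h₀] using hI.is_const_of_deriv_eq_zero hIc
      (fun t ht => (hderiv t ht).differentiableAt.differentiableWithinAt)
      (fun t ht => (hderiv t ht).deriv) hs hs₀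
  funext i
  simpa using (Finset.sum_eq_zero_iff_of_nonneg (fun i _ => by positivity)).1 hconst i
    (Finset.mem_univ i)

end SkewLinearSystem

end Derivatives

section CrossProduct

theorem cross3_eq (u v : E3) : cross3 u v = toLp 2 (ofLp u ⨯₃ ofLp v) := rfl

theorem real_inner_eq_dotProduct {ι : Type*} [Fintype ι] (u v : EuclideanSpace ℝ ι) :
    ⟪u, v⟫ = ofLp u ⬝ᵥ ofLp v := by
  simp [EuclideanSpace.inner_eq_star_dotProduct, dotProduct_comm]

theorem inner_cross3_self_left (u v : E3) : ⟪u, cross3 u v⟫ = 0 := by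
  simp [real_inner_eq_dotProduct, cross3_eq, dot_self_cross]

theorem inner_cross3_self_right (u v : E3) : ⟪v, cross3 u v⟫ = 0 := by
  simp [real_inner_eq_dotProduct, cross3_eq, dot_cross_self]

theorem cross3_self (u : E3) : cross3 u u = 0 := by
  simp [cross3_eq]

theorem cross3_smul_left (c : ℝ) (u v : E3) : cross3 (c • u) v = c • cross3 u v := by
  simp [cross3_eq]

theorem cross3_smul_right (c : ℝ) (u v : E3) : cross3 u (c • v) = c • cross3 u v := by
  simp [cross3_eq]

theorem cross3_add_right (u v w : E3) : cross3 u (v + w) = cross3 u v + cross3 u w := by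
  simp [cross3_eq]

theorem cross3_cross3 (u v w : E3) : cross3 u (cross3 v w) = ⟪u, w⟫ • v - ⟪v, u⟫ • w := by
  rw [cross3_eq, cross3_eq, ofLp_toLp, cross_cross_eq_smul_sub_smul', real_inner_eq_dotProduct,
    real_inner_eq_dotProduct]
  rfl

theorem norm_cross3_sq (u v : E3) : ‖cross3 u v‖ ^ 2 = ‖u‖ ^ 2 * ‖v‖ ^ 2 - ⟪u, v⟫ ^ 2 := by
  simp only [← real_inner_self_eq_norm_sq, real_inner_eq_dotProduct, cross3_eq, cross_dot_cross,
    dotProduct_comm (ofLp v) (ofLp u)]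
  ring

theorem det_cross3 (u v : E3) :
    (EuclideanSpace.basisFun (Fin 3) ℝ).toBasis.det ![u, v, cross3 u v] = ‖cross3 u v‖ ^ 2 := by
  have h : (EuclideanSpace.basisFun (Fin 3) ℝ).toBasis.toMatrix ![u, v, cross3 u v] =
      (Matrix.of ![ofLp u, ofLp v, ofLp (cross3 u v)])ᵀ := by
    ext i j; fin_cases j <;> simp [Module.Basis.toMatrix_apply]
  rw [Module.Basis.det_apply, h, det_transpose, ← real_inner_self_eq_norm_sq,
    real_inner_eq_dotProduct, cross3_eq, ofLp_toLp, triple_product_permutation,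
    triple_product_eq_det]
  rfl

theorem orthonormal_cross3 {u v : E3} (hu : ‖u‖ = 1) (hv : ‖v‖ = 1) (huv : ⟪u, v⟫ = 0) :
    Orthonormal ℝ ![u, v, cross3 u v] := by
  have hc : ‖cross3 u v‖ = 1 := by
    have h := norm_cross3_sq u v
    rw [hu, hv, huv] at h
    nlinarith [norm_nonneg (cross3 u v)]
  refine ⟨fun i => by fin_cases i <;> simp [hu, hv, hc], fun i j hij => ?_⟩
  fin_cases i <;> fin_cases j <;> simp_all [real_inner_comm, inner_cross3_self_left,
    inner_cross3_self_right]

theorem det_pos_of_comp_cross3_frame {u v u' v' : E3} (f : E3 →ₗ[ℝ] E3)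
    (hf : f ∘ ![u, v, cross3 u v] = ![u', v', cross3 u' v']) (h : cross3 u v ≠ 0)
    (h' : cross3 u' v' ≠ 0) : 0 < LinearMap.det f := by
  have hdet := (EuclideanSpace.basisFun (Fin 3) ℝ).toBasis.det_comp f ![u, v, cross3 u v]
  rw [hf, det_cross3, det_cross3] at hdet
  have hpos : 0 < LinearMap.det f * ‖cross3 u v‖ ^ 2 := hdet ▸ by positivity
  exact (mul_pos_iff_of_pos_right (by positivity)).1 hpos

noncomputable def cross3CLM : E3 →L[ℝ] E3 →L[ℝ] E3 :=
  LinearMap.toContinuousLinearMap (LinearMap.toContinuousLinearMap.toLinearMap ∘ₗ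
    LinearMap.mk₂ ℝ cross3 (fun _ _ _ => by simp [cross3_eq]) (fun _ _ _ => by simp [cross3_eq])
      (fun _ _ _ => by simp [cross3_eq]) (fun _ _ _ => by simp [cross3_eq]))

theorem HasDerivAt.cross3 {u v : ℝ → E3} {u' v' : E3} {x : ℝ}
    (hu : HasDerivAt u u' x) (hv : HasDerivAt v v' x) :
    HasDerivAt (fun t => cross3 (u t) (v t)) (cross3 (u x) v' + cross3 u' (v x)) x :=
  cross3CLM.hasDerivAt_of_bilinear (fun _ => hu) (fun _ => hv)

end CrossProduct

namespace SpaceCurve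

noncomputable def unitNormal (α : ℝ → E3) (s : ℝ) : E3 :=
  ‖deriv (deriv α) s‖⁻¹ • deriv (deriv α) s

noncomputable def binormal (α : ℝ → E3) (s : ℝ) : E3 :=
  cross3 (deriv α s) (unitNormal α s)

noncomputable def torsion (α : ℝ → E3) (s : ℝ) : ℝ :=
  ⟪cross3 (deriv α s) (deriv (deriv α) s), deriv (deriv (deriv α)) s⟫ /
    ‖cross3 (deriv α s) (deriv (deriv α) s)‖ ^ 2

noncomputable def frenetFrame (α : ℝ → E3) (s : ℝ) : Fin 3 → E3 :=
  ![deriv α s, unitNormal α s, binormal α s]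

def frenetMatrix (κ τ : ℝ) : Matrix (Fin 3) (Fin 3) ℝ :=
  !![0, κ, 0; -κ, 0, τ; 0, -τ, 0]

theorem frenetMatrix_transpose (κ τ : ℝ) : (frenetMatrix κ τ)ᵀ = -frenetMatrix κ τ := by
  ext i j; fin_cases i <;> fin_cases j <;> simp [frenetMatrix]

theorem norm_smul_unitNormal (α : ℝ → E3) (s : ℝ) :
    ‖deriv (deriv α) s‖ • unitNormal α s = deriv (deriv α) s := by
  by_cases h : deriv (deriv α) s = 0
  · simp [unitNormal, h]
  · simp [unitNormal, smul_smul, h]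

theorem norm_unitNormal {α : ℝ → E3} {s : ℝ} (h : deriv (deriv α) s ≠ 0) :
    ‖unitNormal α s‖ = 1 := by
  simpa [unitNormal] using norm_smul_inv_norm (𝕜 := ℝ) h

variable {α : ℝ → E3} {I : Set ℝ} {s : ℝ}

theorem inner_deriv_unitNormal (hI : IsOpen I) (hα : ContDiffOn ℝ 3 α I)
    (hunit : ∀ s ∈ I, ‖deriv α s‖ = 1) (hs : s ∈ I) : ⟪deriv α s, unitNormal α s⟫ = 0 := by
  have h := ((hα.deriv_of_isOpen hI (m := 2) (by norm_num)).hasDerivAt_deriv (by norm_num) hI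
    hs).inner_eq_zero_of_norm_eventually_eq (eventually_of_mem (hI.mem_nhds hs) hunit)
  simp [unitNormal, real_inner_smul_right, h]

theorem orthonormal_frenetFrame (hI : IsOpen I) (hα : ContDiffOn ℝ 3 α I)
    (hunit : ∀ s ∈ I, ‖deriv α s‖ = 1) (hne : ∀ s ∈ I, deriv (deriv α) s ≠ 0) (hs : s ∈ I) :
    Orthonormal ℝ (frenetFrame α s) :=
  orthonormal_cross3 (hunit s hs) (norm_unitNormal (hne s hs))
    (inner_deriv_unitNormal hI hα hunit hs)

theorem hasDerivAt_deriv (hI : IsOpen I) (hα : ContDiffOn ℝ 3 α I) (hs : s ∈ I) :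
    HasDerivAt (deriv α) (‖deriv (deriv α) s‖ • unitNormal α s) s := by
  rw [norm_smul_unitNormal]
  exact (hα.deriv_of_isOpen hI (m := 2) (by norm_num)).hasDerivAt_deriv (by norm_num) hI hs

theorem hasDerivAt_deriv_deriv (hI : IsOpen I) (hα : ContDiffOn ℝ 3 α I) (hs : s ∈ I) :
    HasDerivAt (deriv (deriv α)) (deriv (deriv (deriv α)) s) s :=
  ((hα.deriv_of_isOpen hI (m := 2) (by norm_num)).deriv_of_isOpen hI (m := 1)
    (by norm_num)).hasDerivAt_deriv one_ne_zero hI hs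

theorem differentiableAt_unitNormal (hI : IsOpen I) (hα : ContDiffOn ℝ 3 α I)
    (hne : deriv (deriv α) s ≠ 0) (hs : s ∈ I) : DifferentiableAt ℝ (unitNormal α) s :=
  have hd2 := (hasDerivAt_deriv_deriv hI hα hs).differentiableAt
  ((hd2.norm ℝ hne).inv (norm_ne_zero_iff.2 hne)).smul hd2

theorem inner_deriv_of_hasDerivAt_unitNormal (hI : IsOpen I) (hα : ContDiffOn ℝ 3 α I)
    (hunit : ∀ s ∈ I, ‖deriv α s‖ = 1) (hne : deriv (deriv α) s ≠ 0) (hs : s ∈ I) {N' : E3}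
    (hN' : HasDerivAt (unitNormal α) N' s) : ⟪deriv α s, N'⟫ = -‖deriv (deriv α) s‖ := by
  have h := (hasDerivAt_deriv hI hα hs).inner_add_inner_eq_zero hN'
    (eventually_of_mem (hI.mem_nhds hs) fun t ht => inner_deriv_unitNormal hI hα hunit ht)
  rw [real_inner_smul_left, real_inner_self_eq_norm_sq, norm_unitNormal hne] at h
  linarith

theorem inner_binormal_of_hasDerivAt_unitNormal (hI : IsOpen I) (hα : ContDiffOn ℝ 3 α I)
    (hunit : ∀ s ∈ I, ‖deriv α s‖ = 1) (hne : ∀ s ∈ I, deriv (deriv α) s ≠ 0) (hs : s ∈ I)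
    {N' : E3} (hN' : HasDerivAt (unitNormal α) N' s) : ⟪binormal α s, N'⟫ = torsion α s := by
  set κ := ‖deriv (deriv α) s‖
  have hκ : κ ≠ 0 := norm_ne_zero_iff.2 (hne s hs)
  have hd2 := hasDerivAt_deriv_deriv hI hα hs
  obtain ⟨κ', hκ'⟩ : ∃ κ', HasDerivAt (fun t => ‖deriv (deriv α) t‖) κ' s :=
    ⟨_, (hd2.differentiableAt.norm ℝ (hne s hs)).hasDerivAt⟩
  have hd3 : deriv (deriv (deriv α)) s = κ • N' + κ' • unitNormal α s :=
    hd2.unique ((hκ'.smul hN').congr_of_eventuallyEq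
      (Eventually.of_forall fun t => (norm_smul_unitNormal α t).symm))
  have hF := orthonormal_frenetFrame hI hα hunit hne hs
  have hBN : ⟪binormal α s, unitNormal α s⟫ = 0 := hF.2 (by decide : (2 : Fin 3) ≠ 1)
  have hB1 : ‖binormal α s‖ = 1 := hF.1 2
  have hc : cross3 (deriv α s) (deriv (deriv α) s) = κ • binormal α s := by
    rw [← norm_smul_unitNormal α s, cross3_smul_right]; rfl
  rw [torsion, hc, hd3, norm_smul, hB1]
  simp only [inner_add_right, real_inner_smul_left, real_inner_smul_right, hBN, mul_zero,
    add_zero, mul_one, Real.norm_eq_abs, sq_abs]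
  field_simp

theorem hasDerivAt_unitNormal (hI : IsOpen I) (hα : ContDiffOn ℝ 3 α I)
    (hunit : ∀ s ∈ I, ‖deriv α s‖ = 1) (hne : ∀ s ∈ I, deriv (deriv α) s ≠ 0) (hs : s ∈ I) :
    HasDerivAt (unitNormal α)
      (-‖deriv (deriv α) s‖ • deriv α s + torsion α s • binormal α s) s := by
  have hN' := (differentiableAt_unitNormal hI hα (hne s hs) hs).hasDerivAt
  have hT := inner_deriv_of_hasDerivAt_unitNormal hI hα hunit (hne s hs) hs hN'
  have hN := hN'.inner_eq_zero_of_norm_eventually_eq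
    (eventually_of_mem (hI.mem_nhds hs) fun t ht => norm_unitNormal (hne t ht))
  have hB := inner_binormal_of_hasDerivAt_unitNormal hI hα hunit hne hs hN'
  obtain ⟨b, hb⟩ := (orthonormal_frenetFrame hI hα hunit hne hs).exists_orthonormalBasis_coe_eq
    (by simp)
  have h := b.sum_repr' (deriv (unitNormal α) s)
  rw [hb, Fin.sum_univ_three] at h
  simp [frenetFrame, hT, hN, hB] at h
  rw [neg_smul, h]
  exact hN'

theorem hasDerivAt_binormal (hI : IsOpen I) (hα : ContDiffOn ℝ 3 α I)
    (hunit : ∀ s ∈ I, ‖deriv α s‖ = 1) (hne : ∀ s ∈ I, deriv (deriv α) s ≠ 0) (hs : s ∈ I) :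
    HasDerivAt (binormal α) (-torsion α s • unitNormal α s) s := by
  refine ((hasDerivAt_deriv hI hα hs).cross3
    (hasDerivAt_unitNormal hI hα hunit hne hs)).congr_deriv ?_
  rw [cross3_add_right, cross3_smul_right, cross3_smul_right, cross3_self, cross3_smul_left,
    cross3_self, binormal, cross3_cross3, inner_deriv_unitNormal hI hα hunit hs,
    real_inner_self_eq_norm_sq, hunit s hs]
  simp

theorem hasDerivAt_frenetFrame (hI : IsOpen I) (hα : ContDiffOn ℝ 3 α I)
    (hunit : ∀ s ∈ I, ‖deriv α s‖ = 1) (hne : ∀ s ∈ I, deriv (deriv α) s ≠ 0) (hs : s ∈ I)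
    (i : Fin 3) :
    HasDerivAt (fun t => frenetFrame α t i)
      (∑ j, frenetMatrix ‖deriv (deriv α) s‖ (torsion α s) i j • frenetFrame α s j) s := by
  fin_cases i
  · simpa [frenetFrame, frenetMatrix, Fin.sum_univ_three] using hasDerivAt_deriv hI hα hs
  · simpa [frenetFrame, frenetMatrix, Fin.sum_univ_three] using
      hasDerivAt_unitNormal hI hα hunit hne hs
  · simpa [frenetFrame, frenetMatrix, Fin.sum_univ_three] using
      hasDerivAt_binormal hI hα hunit hne hs

theorem comp_frenetFrame_eqOn {β : ℝ → E3} (hI : IsOpen I) (hIc : IsPreconnected I)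
    (hα : ContDiffOn ℝ 3 α I) (hβ : ContDiffOn ℝ 3 β I) (hunitα : ∀ s ∈ I, ‖deriv α s‖ = 1)
    (hunitβ : ∀ s ∈ I, ‖deriv β s‖ = 1) (hneα : ∀ s ∈ I, deriv (deriv α) s ≠ 0)
    (hneβ : ∀ s ∈ I, deriv (deriv β) s ≠ 0)
    (hcurv : ∀ s ∈ I, ‖deriv (deriv α) s‖ = ‖deriv (deriv β) s‖)
    (htor : ∀ s ∈ I, torsion α s = torsion β s) (ρ : E3 →L[ℝ] E3) {s₀ : ℝ} (hs₀ : s₀ ∈ I)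
    (h₀ : ρ ∘ frenetFrame α s₀ = frenetFrame β s₀) :
    Set.EqOn (fun s => ρ ∘ frenetFrame α s) (frenetFrame β) I := by
  have hD := eqOn_zero_of_skew_linear_ode (D := fun s => ρ ∘ frenetFrame α s - frenetFrame β s)
    (A := fun s => frenetMatrix ‖deriv (deriv α) s‖ (torsion α s)) hI hIc
    (fun s _ => frenetMatrix_transpose _ _) ?_ hs₀ (by simp [h₀])
  · exact fun s hs => sub_eq_zero.1 (hD hs)
  intro s hs i
  have h := (ρ.hasFDerivAt.comp_hasDerivAt s (hasDerivAt_frenetFrame hI hα hunitα hneα hs i)).sub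
    (hasDerivAt_frenetFrame hI hβ hunitβ hneβ hs i)
  rw [← hcurv s hs, ← htor s hs] at h
  refine h.congr_deriv ?_
  simp [map_sum, map_smul, smul_sub, Finset.sum_sub_distrib]

end SpaceCurve

open SpaceCurve

/-- Fundamental theorem of space curves, uniqueness: two unit-speed curves with the same
positive curvature and the same torsion differ by a rigid motion (a rotation plus a
translation) on some subinterval. -/
theorem fundamental_theorem_uniqueness
    (I : Set ℝ) (hI : IsOpen I) (hIc : I.OrdConnected) (hIne : I.Nonempty)
    (α α' : ℝ → EuclideanSpace ℝ (Fin 3)) (κ τ : ℝ → ℝ)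
    (hα : ContDiffOn ℝ 3 α I) (hα' : ContDiffOn ℝ 3 α' I)
    (hκpos : ∀ s ∈ I, 0 < κ s)
    (hunit : ∀ s ∈ I, ‖deriv α s‖ = 1)
    (hunit' : ∀ s ∈ I, ‖deriv α' s‖ = 1)
    (hcurv : ∀ s ∈ I, ‖deriv (deriv α) s‖ = κ s)
    (hcurv' : ∀ s ∈ I, ‖deriv (deriv α') s‖ = κ s)
    (htor : ∀ s ∈ I, ⟪cross3 (deriv α s) (deriv (deriv α) s), deriv (deriv (deriv α)) s⟫ /
      ‖cross3 (deriv α s) (deriv (deriv α) s)‖ ^ 2 = τ s)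
    (htor' : ∀ s ∈ I, ⟪cross3 (deriv α' s) (deriv (deriv α') s), deriv (deriv (deriv α')) s⟫ /
      ‖cross3 (deriv α' s) (deriv (deriv α') s)‖ ^ 2 = τ s) :
    ∃ ρ : EuclideanSpace ℝ (Fin 3) ≃ₗᵢ[ℝ] EuclideanSpace ℝ (Fin 3),
      0 < LinearMap.det (ρ.toLinearEquiv : EuclideanSpace ℝ (Fin 3) →ₗ[ℝ] EuclideanSpace ℝ (Fin 3)) ∧
      ∃ c : EuclideanSpace ℝ (Fin 3), ∃ J : Set ℝ, IsOpen J ∧ J.OrdConnected ∧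
        J.Nonempty ∧ J ⊆ I ∧ ∀ s ∈ J, α' s = ρ (α s) + c := by
  obtain ⟨s₀, hs₀⟩ := hIne
  have hne : ∀ s ∈ I, deriv (deriv α) s ≠ 0 := fun s hs =>
    norm_ne_zero_iff.1 ((hcurv s hs).trans_ne (hκpos s hs).ne')
  have hne' : ∀ s ∈ I, deriv (deriv α') s ≠ 0 := fun s hs =>
    norm_ne_zero_iff.1 ((hcurv' s hs).trans_ne (hκpos s hs).ne')
  have hF := orthonormal_frenetFrame hI hα hunit hne hs₀
  have hF' := orthonormal_frenetFrame hI hα' hunit' hne' hs₀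
  obtain ⟨ρ, hρ⟩ := hF.exists_linearIsometryEquiv_apply_eq hF' (by simp)
  have hframe := comp_frenetFrame_eqOn hI hIc.isPreconnected hα hα' hunit hunit' hne hne'
    (fun s hs => (hcurv s hs).trans (hcurv' s hs).symm)
    (fun s hs => (htor s hs).trans (htor' s hs).symm) (ρ : E3 →L[ℝ] E3) hs₀ (funext hρ)
  have hderiv : Set.EqOn (deriv α') (deriv fun s => ρ (α s)) I := fun s hs =>
    (congrFun (hframe hs) 0).symm.trans (((ρ : E3 →L[ℝ] E3).hasFDerivAt.comp_hasDerivAt s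
      (hα.hasDerivAt_deriv (by norm_num) hI hs)).deriv).symm
  obtain ⟨c, hc⟩ := hI.exists_eq_add_of_deriv_eq hIc.isPreconnected
    (hα'.differentiableOn (by norm_num))
    (ρ.differentiable.comp_differentiableOn (hα.differentiableOn (by norm_num))) hderiv
  exact ⟨ρ, det_pos_of_comp_cross3_frame _ (funext hρ) (hF.ne_zero 2) (hF'.ne_zero 2), c, I, hI,
    hIc, ⟨s₀, hs₀⟩, subset_rfl, hc⟩
end

section
/- (Slant helix position vector) Let κ be C¹ and positive and m ≠ 0 a constant, and define α(s) = (x(s),y(s),z(s)) by x(s) = (1/√(1+m²))∫(∫ sin[(√(1+m²)/m)·arccos(m∫₀ˢκ)]·κ(s) ds) ds, y(s) = (1/√(1+m²))∫(∫ cos[(√(1+m²)/m)·arccos(m∫₀ˢκ)]·κ(s) ds) ds, z(s) = (|m|/√(1+m²))∫(∫₀ˢκ) ds, on an interval where |m∫₀ˢκ| < 1/√(1+m²). Then α is a unit-speed curve whose principal normal satisfies ⟨n(s),(0,0,1)⟩ = |m|/√(1+m²); i.e., α is a slant helix. -/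
open Real
open scoped RealInnerProductSpace

/-! Write `c = √(1 + m²)`, `w = m K` and `θ = (c / m) arccos w`. Then
`θ' = -c κ / √(1 - w²)`, which makes the inner antiderivatives explicit:
`P = c √(1 - w²) cos θ - m² K sin θ` and `Q = -c √(1 - w²) sin θ - m² K cos θ` satisfy
`P' = κ sin θ` and `Q' = κ cos θ`, because the `1/√(1 - w²)`-terms cancel and `c² - m² = 1`.
The cross terms cancel in `P² + Q² = c² (1 - w²) + m⁴ K²`, so `P² + Q² + m² K² = c²` and
`α' = (P, Q, |m| K) / c` has unit length. Finally `α'' = (κ / c) (sin θ, cos θ, |m|)` with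
`κ > 0`, so `n = (sin θ, cos θ, |m|) / c`, whose third coordinate is `|m| / c`. -/

theorem hasDerivAt_integral_of_continuousOn {E : Type*} [NormedAddCommGroup E]
    [NormedSpace ℝ E] [CompleteSpace E] {I : Set ℝ} (hI : IsOpen I) (hIc : I.OrdConnected)
    {f : ℝ → E} (hf : ContinuousOn f I) {a s : ℝ} (ha : a ∈ I) (hs : s ∈ I) :
    HasDerivAt (fun t => ∫ u in a..t, f u) (f s) s :=
  intervalIntegral.integral_hasDerivAt_right
    ((hf.mono (hIc.uIcc_subset ha hs)).intervalIntegrable)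
    (hf.stronglyMeasurableAtFilter hI s hs) (hf.continuousAt (hI.mem_nhds hs))

theorem deriv_deriv_eq_of_hasDerivAt {E : Type*} [NormedAddCommGroup E] [NormedSpace ℝ E]
    {α v : ℝ → E} {I : Set ℝ} (hI : IsOpen I) (hα : ∀ t ∈ I, HasDerivAt α (v t) t)
    {s : ℝ} (hs : s ∈ I) {v' : E} (hv : HasDerivAt v v' s) : deriv (deriv α) s = v' := by
  have hderiv : deriv α =ᶠ[nhds s] v :=
    Filter.eventuallyEq_of_mem (hI.mem_nhds hs) fun t ht => (hα t ht).deriv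
  rw [hderiv.deriv_eq, hv.deriv]

theorem hasDerivAt_euclideanSpace_three {x y z : ℝ → ℝ} {x' y' z' s : ℝ}
    (hx : HasDerivAt x x' s) (hy : HasDerivAt y y' s) (hz : HasDerivAt z z' s) :
    HasDerivAt (fun t => ((WithLp.equiv 2 (Fin 3 → ℝ)).symm ![x t, y t, z t] :
      EuclideanSpace ℝ (Fin 3))) ((WithLp.equiv 2 (Fin 3 → ℝ)).symm ![x', y', z']) s := by
  have hvec : HasDerivAt (fun t => ![x t, y t, z t]) ![x', y', z'] s := by
    refine hasDerivAt_pi.2 fun i => ?_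
    fin_cases i
    exacts [hx, hy, hz]
  exact (PiLp.hasFDerivAt_toLp 2 _).comp_hasDerivAt s hvec

theorem norm_euclideanSpace_three (a b c : ℝ) :
    ‖((WithLp.equiv 2 (Fin 3 → ℝ)).symm ![a, b, c] : EuclideanSpace ℝ (Fin 3))‖ =
      √(a ^ 2 + b ^ 2 + c ^ 2) := by
  simp [EuclideanSpace.norm_eq, Fin.sum_univ_three]

theorem inner_euclideanSpace_three (a b c d e f : ℝ) :
    ⟪((WithLp.equiv 2 (Fin 3 → ℝ)).symm ![a, b, c] : EuclideanSpace ℝ (Fin 3)),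
      (WithLp.equiv 2 (Fin 3 → ℝ)).symm ![d, e, f]⟫ = a * d + b * e + c * f := by
  simp only [WithLp.equiv_symm_apply, PiLp.inner_apply, Fin.sum_univ_three]
  simp
  ring

section SlantHelix

variable (m : ℝ) (K : ℝ → ℝ)

noncomputable def slantAngle (s : ℝ) : ℝ := √(1 + m ^ 2) / m * arccos (m * K s)

noncomputable def slantP (s : ℝ) : ℝ :=
  √(1 + m ^ 2) * √(1 - (m * K s) ^ 2) * cos (slantAngle m K s) -
    m ^ 2 * K s * sin (slantAngle m K s)

noncomputable def slantQ (s : ℝ) : ℝ :=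
  -(√(1 + m ^ 2) * √(1 - (m * K s) ^ 2) * sin (slantAngle m K s)) -
    m ^ 2 * K s * cos (slantAngle m K s)

variable {m K} {k s : ℝ}

theorem hasDerivAt_slantAngle (hm : m ≠ 0) (hK : HasDerivAt K k s) (hw : |m * K s| < 1) :
    HasDerivAt (slantAngle m K) (-(√(1 + m ^ 2) * k) / √(1 - (m * K s) ^ 2)) s := by
  obtain ⟨hw₁, hw₂⟩ := abs_lt.1 hw
  refine (((hasDerivAt_arccos hw₁.ne' hw₂.ne).comp s (hK.const_mul m)).const_mul
    (√(1 + m ^ 2) / m)).congr_deriv ?_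
  field_simp

theorem hasDerivAt_sqrt_one_sub_sq (hK : HasDerivAt K k s) (hw : |m * K s| < 1) :
    HasDerivAt (fun t => √(1 - (m * K t) ^ 2))
      (-(m * K s) * (m * k) / √(1 - (m * K s) ^ 2)) s := by
  have hw' : 1 - (m * K s) ^ 2 ≠ 0 := (sub_pos.2 ((sq_lt_one_iff_abs_lt_one _).2 hw)).ne'
  refine ((((hK.const_mul m).pow 2).const_sub 1).sqrt hw').congr_deriv ?_
  simp only [Pi.pow_apply]
  field_simp
  ring

theorem hasDerivAt_slantP (hm : m ≠ 0) (hK : HasDerivAt K k s) (hw : |m * K s| < 1) :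
    HasDerivAt (slantP m K) (sin (slantAngle m K s) * k) s := by
  have hθ := hasDerivAt_slantAngle hm hK hw
  have h := (((hasDerivAt_sqrt_one_sub_sq hK hw).const_mul (√(1 + m ^ 2))).mul hθ.cos).sub
    ((hK.const_mul (m ^ 2)).mul hθ.sin)
  refine h.congr_deriv ?_
  have hc : √(1 + m ^ 2) ^ 2 = 1 + m ^ 2 := sq_sqrt (by positivity)
  have hR := (sqrt_pos.2 (sub_pos.2 ((sq_lt_one_iff_abs_lt_one _).2 hw))).ne'
  generalize √(1 - (m * K s) ^ 2) = R at hR ⊢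
  field_simp
  linear_combination k * R * sin (slantAngle m K s) * hc

theorem hasDerivAt_slantQ (hm : m ≠ 0) (hK : HasDerivAt K k s) (hw : |m * K s| < 1) :
    HasDerivAt (slantQ m K) (cos (slantAngle m K s) * k) s := by
  have hθ := hasDerivAt_slantAngle hm hK hw
  have h := (((hasDerivAt_sqrt_one_sub_sq hK hw).const_mul (√(1 + m ^ 2))).mul hθ.sin).neg.sub
    ((hK.const_mul (m ^ 2)).mul hθ.cos)
  refine h.congr_deriv ?_
  have hc : √(1 + m ^ 2) ^ 2 = 1 + m ^ 2 := sq_sqrt (by positivity)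
  have hR := (sqrt_pos.2 (sub_pos.2 ((sq_lt_one_iff_abs_lt_one _).2 hw))).ne'
  generalize √(1 - (m * K s) ^ 2) = R at hR ⊢
  field_simp
  linear_combination k * R * cos (slantAngle m K s) * hc

theorem slantP_sq_add_slantQ_sq_add (hw : |m * K s| ≤ 1) :
    slantP m K s ^ 2 + slantQ m K s ^ 2 + m ^ 2 * K s ^ 2 = 1 + m ^ 2 := by
  have hc : √(1 + m ^ 2) ^ 2 = 1 + m ^ 2 := sq_sqrt (by positivity)
  have hR : √(1 - (m * K s) ^ 2) ^ 2 = 1 - (m * K s) ^ 2 :=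
    sq_sqrt (sub_nonneg.2 ((sq_le_one_iff_abs_le_one _).2 hw))
  have := sin_sq_add_cos_sq (slantAngle m K s)
  simp only [slantP, slantQ]
  linear_combination (√(1 + m ^ 2) ^ 2 * √(1 - (m * K s) ^ 2) ^ 2 + m ^ 4 * K s ^ 2) * this +
    √(1 - (m * K s) ^ 2) ^ 2 * hc + (1 + m ^ 2) * hR

theorem norm_slantHelix_tangent (hw : |m * K s| ≤ 1) :
    ‖((WithLp.equiv 2 (Fin 3 → ℝ)).symm ![1 / √(1 + m ^ 2) * slantP m K s,
      1 / √(1 + m ^ 2) * slantQ m K s, |m| / √(1 + m ^ 2) * K s] : EuclideanSpace ℝ (Fin 3))‖ =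
      1 := by
  have hc : √(1 + m ^ 2) ^ 2 = 1 + m ^ 2 := sq_sqrt (by positivity)
  have hc₀ : √(1 + m ^ 2) ≠ 0 := by positivity
  rw [norm_euclideanSpace_three, sqrt_eq_one]
  field_simp
  linear_combination slantP_sq_add_slantQ_sq_add hw + K s ^ 2 * sq_abs m - hc

theorem inner_normalize_slantHelix_normal (θ : ℝ) (hk : 0 < k) :
    let v : EuclideanSpace ℝ (Fin 3) := (WithLp.equiv 2 (Fin 3 → ℝ)).symm
      ![1 / √(1 + m ^ 2) * (sin θ * k), 1 / √(1 + m ^ 2) * (cos θ * k),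
        |m| / √(1 + m ^ 2) * k]
    ⟪‖v‖⁻¹ • v, (WithLp.equiv 2 (Fin 3 → ℝ)).symm ![0, 0, 1]⟫ = |m| / √(1 + m ^ 2) := by
  intro v
  have hc : √(1 + m ^ 2) ^ 2 = 1 + m ^ 2 := sq_sqrt (by positivity)
  have hc₀ : √(1 + m ^ 2) ≠ 0 := by positivity
  have hv : ‖v‖ = k := by
    rw [norm_euclideanSpace_three, sqrt_eq_iff_eq_sq (by positivity) hk.le]
    field_simp
    linear_combination sin_sq_add_cos_sq θ + sq_abs m - hc
  rw [real_inner_smul_left, hv, inner_euclideanSpace_three]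
  field_simp
  ring

end SlantHelix

/-- Slant helix position vector: with
`x = (1/√(1+m²))∫(∫ sin[(√(1+m²)/m)arccos(m∫₀ˢκ)]κ)`,
`y = (1/√(1+m²))∫(∫ cos[(√(1+m²)/m)arccos(m∫₀ˢκ)]κ)`,
`z = (|m|/√(1+m²))∫(∫₀ˢκ)` (for suitable antiderivatives), the curve `α = (x,y,z)` is unit
speed and its principal normal `n = α''/|α''|` satisfies `⟨n,(0,0,1)⟩ = |m|/√(1+m²)`:
`α` is a slant helix. -/
theorem slant_helix_position_vector
    (I : Set ℝ) (hI : IsOpen I) (hIc : I.OrdConnected) (h0 : (0 : ℝ) ∈ I)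
    (κ : ℝ → ℝ) (hκ : ContDiffOn ℝ 1 κ I) (hκpos : ∀ s ∈ I, 0 < κ s)
    (m : ℝ) (hm : m ≠ 0)
    (K : ℝ → ℝ) (hK : K = fun s => ∫ u in (0 : ℝ)..s, κ u)
    (hdom : ∀ s ∈ I, |m * K s| < 1 / Real.sqrt (1 + m ^ 2)) :
    ∃ P Q x y z : ℝ → ℝ,
      (∀ s ∈ I, HasDerivAt P
        (Real.sin (Real.sqrt (1 + m ^ 2) / m * Real.arccos (m * K s)) * κ s) s) ∧
      (∀ s ∈ I, HasDerivAt Q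
        (Real.cos (Real.sqrt (1 + m ^ 2) / m * Real.arccos (m * K s)) * κ s) s) ∧
      (∀ s ∈ I, HasDerivAt x (1 / Real.sqrt (1 + m ^ 2) * P s) s) ∧
      (∀ s ∈ I, HasDerivAt y (1 / Real.sqrt (1 + m ^ 2) * Q s) s) ∧
      (∀ s ∈ I, HasDerivAt z (|m| / Real.sqrt (1 + m ^ 2) * K s) s) ∧
      ∀ α : ℝ → EuclideanSpace ℝ (Fin 3),
        α = (fun s => (WithLp.equiv 2 (Fin 3 → ℝ)).symm ![x s, y s, z s]) →
        ∀ s ∈ I, ‖deriv α s‖ = 1 ∧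
          ⟪(‖deriv (deriv α) s‖)⁻¹ • deriv (deriv α) s,
            ((WithLp.equiv 2 (Fin 3 → ℝ)).symm ![0, 0, 1] : EuclideanSpace ℝ (Fin 3))⟫ =
          |m| / Real.sqrt (1 + m ^ 2) := by
  have antideriv : ∀ f : ℝ → ℝ, ContinuousOn f I →
      ∀ s ∈ I, HasDerivAt (fun t => ∫ u in (0 : ℝ)..t, f u) (f s) s :=
    fun f hf s hs => hasDerivAt_integral_of_continuousOn hI hIc hf h0 hs
  have hKd : ∀ s ∈ I, HasDerivAt K (κ s) s := hK ▸ antideriv κ hκ.continuousOn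
  have hw : ∀ s ∈ I, |m * K s| < 1 := fun s hs =>
    (hdom s hs).trans_le ((div_le_one (by positivity)).2 (one_le_sqrt.2 (by nlinarith)))
  have hPd : ∀ s ∈ I, HasDerivAt (slantP m K) (sin (slantAngle m K s) * κ s) s :=
    fun s hs => hasDerivAt_slantP hm (hKd s hs) (hw s hs)
  have hQd : ∀ s ∈ I, HasDerivAt (slantQ m K) (cos (slantAngle m K s) * κ s) s :=
    fun s hs => hasDerivAt_slantQ hm (hKd s hs) (hw s hs)
  have hx := antideriv (fun u => 1 / √(1 + m ^ 2) * slantP m K u)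
    (continuousOn_const.mul (HasDerivAt.continuousOn hPd))
  have hy := antideriv (fun u => 1 / √(1 + m ^ 2) * slantQ m K u)
    (continuousOn_const.mul (HasDerivAt.continuousOn hQd))
  have hz := antideriv (fun u => |m| / √(1 + m ^ 2) * K u)
    (continuousOn_const.mul (HasDerivAt.continuousOn hKd))
  refine ⟨_, _, _, _, _, hPd, hQd, hx, hy, hz, ?_⟩
  rintro α rfl s hs
  have hα' t (ht : t ∈ I) := hasDerivAt_euclideanSpace_three (hx t ht) (hy t ht) (hz t ht)
  have hα'' := deriv_deriv_eq_of_hasDerivAt hI hα' hs <| hasDerivAt_euclideanSpace_three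
    ((hPd s hs).const_mul _) ((hQd s hs).const_mul _) ((hKd s hs).const_mul _)
  refine ⟨?_, ?_⟩
  · rw [(hα' s hs).deriv]
    exact norm_slantHelix_tangent (hw s hs).le
  · rw [hα'']
    exact inner_normalize_slantHelix_normal _ (hκpos s hs)
end
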